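/- Let m ≥ 4 be even. Let M be the m×m real matrix whose first two columns are e_1 and e_2 and whose remaining m−2 columns are the vectors e_{i−2} + e_{i−1} − e_i − e_{i+1} for i = 1, 2, …, m−2, where e_1,…,e_m is the standard basis of ℝ^m and all indices are taken modulo m with representatives in {1,…,m}. Then |det(M)| = m/2. -/

import Mathlib

/-!
Let `w` be the row vector with `w k = (-1)^k ⌊k/2⌋` for `k < m - 1` and `w (m-1) = 1`.
Since `(-1)^k ⌊k/2⌋ + (-1)^(k+1) ⌊(k+1)/2⌋ = k mod 2` depends only on the parity of `k`, `w`
is orthogonal to the columns `e_{j-4} + e_{j-3} - e_{j-2} - e_{j-1}` with `j ≥ 4`; for the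
wrap-around columns the value `w (m-1) = 1` gives `1 - w 2 = 0` at `j = 3` and
`w (m-2) + 1 = m/2` at `j = 2` (as `m` is even), and `w` vanishes on `e₀, e₁`. So `w M = (m/2) e₂`,
and as `w (m-1) = 1`, replacing the last row of `M` by `w M` keeps the determinant. Cycling the
columns `2, 3, …, m-1` then makes the matrix upper triangular with diagonal `1, 1, -1, …, -1, m/2`.
-/

open Matrix

namespace Fin

variable {m : ℕ} [NeZero m]

theorem val_ofNat_of_lt {a : ℕ} (ha : a < m) : (OfNat.ofNat a : Fin m).val = a :=
  Nat.mod_eq_of_lt ha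

theorem val_sub_ofNat (j : Fin m) {a : ℕ} (ha : a ≤ m) :
    (j - OfNat.ofNat a : Fin m).val = if a ≤ j.val then j.val - a else j.val + m - a := by
  have hj := j.isLt
  rw [Fin.val_sub, show (OfNat.ofNat a : Fin m).val = a % m from Fin.val_ofNat m a]
  rcases ha.lt_or_eq with ha | rfl
  · rw [Nat.mod_eq_of_lt ha]
    split_ifs
    · rw [show m - a + j.val = j.val - a + m by omega, Nat.add_mod_right,
        Nat.mod_eq_of_lt (by omega)]
    · rw [Nat.mod_eq_of_lt (by omega)]
      omega
  · rw [Nat.mod_self, if_neg (by omega), Nat.sub_zero, Nat.add_sub_cancel, Nat.add_mod_left,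
      Nat.mod_eq_of_lt hj]

theorem eq_sub_ofNat_iff {t j : Fin m} {a : ℕ} (ha : a ≤ m) :
    t = j - OfNat.ofNat a ↔ t.val + a = j.val ∨ t.val + a = j.val + m := by
  rw [Fin.ext_iff, val_sub_ofNat j ha]
  have := t.isLt
  split_ifs <;> omega

theorem val_cycleIcc_two_top (hm : 3 ≤ m) {j : Fin m} (hj : j < ⊤) :
    (cycleIcc 2 ⊤ j).val = if j.val < 2 then j.val else j.val + 1 := by
  have h2 : (2 : Fin m).val = 2 := val_ofNat_of_lt (show 2 < m by omega)
  split_ifs with hj2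
  · rw [cycleIcc_of_lt (lt_def.mpr (by omega))]
  · rw [cycleIcc_of_ge_of_lt (le_def.mpr (by omega)) hj, val_add_one_of_lt' ?_]
    rw [lt_def, val_top] at hj
    omega

end Fin

namespace Matrix

theorem det_updateRow_vecMul {n R : Type*} [Fintype n] [DecidableEq n] [CommRing R]
    (A : Matrix n n R) (i : n) (w : n → R) :
    (A.updateRow i (w ᵥ* A)).det = w i * A.det := by
  rw [vecMul_eq_sum, det_updateRow_sum, smul_eq_mul]

theorem abs_det_eq_abs_prod_of_isUpperTriangular_submatrix {n R : Type*} [Fintype n]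
    [DecidableEq n] [LinearOrder n] [CommRing R] [LinearOrder R] [IsStrictOrderedRing R]
    (A : Matrix n n R) (σ : Equiv.Perm n) (h : (A.submatrix id σ).IsUpperTriangular) :
    |A.det| = |∏ i, A i (σ i)| := by
  have hdet : (A.submatrix id σ).det = ∏ i, A i (σ i) := det_of_isUpperTriangular h
  rw [← hdet, det_permute']
  rcases Int.units_eq_one_or (Equiv.Perm.sign σ) with hσ | hσ <;> simp [hσ]

end Matrix

noncomputable def altHalf (n : ℕ) : ℝ := (-1) ^ n * (n / 2 : ℕ)

theorem altHalf_two_mul (q : ℕ) : altHalf (2 * q) = q := by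
  simp [altHalf, pow_mul]

theorem altHalf_add_altHalf_succ (n : ℕ) : altHalf n + altHalf (n + 1) = (n % 2 : ℕ) := by
  obtain ⟨q, rfl | rfl⟩ := Nat.even_or_odd' n
  · simp [altHalf, pow_succ, pow_mul, Nat.mul_add_div]
  · rw [show 2 * q + 1 + 1 = 2 * (q + 1) by ring, altHalf_two_mul]
    simp [altHalf, pow_succ, pow_mul, Nat.mul_add_div]

section

variable {m : ℕ} [NeZero m]

def socMatrix (m : ℕ) [NeZero m] : Matrix (Fin m) (Fin m) ℝ :=
  of fun t j =>
    if j.val < 2 then (if t = j then 1 else 0)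
    else (if t = j - 4 then 1 else 0) + (if t = j - 3 then 1 else 0)
      - (if t = j - 2 then 1 else 0) - (if t = j - 1 then 1 else 0)

theorem vecMul_socMatrix_apply (w : Fin m → ℝ) (j : Fin m) :
    (w ᵥ* socMatrix m) j =
      if j.val < 2 then w j else w (j - 4) + w (j - 3) - w (j - 2) - w (j - 1) := by
  simp only [vecMul, dotProduct, socMatrix, of_apply]
  split_ifs <;> simp [mul_add, mul_sub, Finset.sum_add_distrib, Finset.sum_sub_distrib]

noncomputable def socWeight (m : ℕ) (k : Fin m) : ℝ :=
  if k.val + 1 = m then 1 else altHalf k.val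

theorem vecMul_socWeight_socMatrix (hm : 4 ≤ m) (heven : Even m) :
    socWeight m ᵥ* socMatrix m = Pi.single 2 ((m : ℝ) / 2) := by
  obtain ⟨q, hq⟩ : ∃ q, m = 2 * q + 2 := by
    obtain ⟨r, hr⟩ := heven
    exact ⟨r - 1, by omega⟩
  funext j
  have hj := j.isLt
  rw [vecMul_socMatrix_apply, Pi.single_apply]
  simp only [Fin.ext_iff, Fin.val_ofNat_of_lt (show 2 < m by omega), socWeight,
    Fin.val_sub_ofNat j hm, Fin.val_sub_ofNat j (show 3 ≤ m by omega),
    Fin.val_sub_ofNat j (show 2 ≤ m by omega), Fin.val_sub_ofNat j (show 1 ≤ m by omega)]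
  generalize j.val = v at *
  rcases Nat.lt_or_ge v 4 with hv | hv
  · interval_cases v <;> simp (disch := omega) only [if_pos, if_neg]
    · simp [altHalf]
    · simp [altHalf]
    · rw [show 2 + m - 4 = 2 * q by omega, altHalf_two_mul, hq]
      norm_num [altHalf]
      ring
    · norm_num [altHalf]
  · obtain ⟨w, rfl⟩ := Nat.exists_eq_add_of_le' hv
    simp (disch := omega) only [if_pos, if_neg]
    rw [show w + 4 - 4 = w by omega, show w + 4 - 3 = w + 1 by omega,
      show w + 4 - 2 = w + 2 by omega, show w + 4 - 1 = w + 2 + 1 by omega]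
    have hshift := altHalf_add_altHalf_succ (w + 2)
    rw [Nat.add_mod_right] at hshift
    linear_combination altHalf_add_altHalf_succ w - hshift

/- The cycle `2 → 3 → ⋯ → m-1 → 2` puts column `j + 1`, whose lowest entry is the `-1` in
row `j`, in position `j`, and column `2` last, opposite the new last row `c • e₂`. -/
theorem socMatrix_updateRow_submatrix_isUpperTriangular (hm : 4 ≤ m) (c : ℝ) :
    (((socMatrix m).updateRow ⊤ (Pi.single 2 c)).submatrix id
      (Fin.cycleIcc 2 ⊤)).IsUpperTriangular := by
  intro i j (hij : j < i)
  have hτ := Fin.val_cycleIcc_two_top (by omega) (hij.trans_le le_top)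
  have := i.isLt
  rw [Fin.lt_def] at hij
  simp only [submatrix_apply, id, updateRow_apply]
  split_ifs with hi
  · rw [Pi.single_eq_of_ne]
    rw [Fin.ne_iff_vne, Fin.val_ofNat_of_lt (show 2 < m by omega), hτ]
    rw [Fin.ext_iff, Fin.val_top] at hi
    split_ifs <;> omega
  · rw [Fin.ext_iff, Fin.val_top] at hi
    simp only [socMatrix, of_apply, Fin.eq_sub_ofNat_iff hm,
      Fin.eq_sub_ofNat_iff (show 3 ≤ m by omega), Fin.eq_sub_ofNat_iff (show 2 ≤ m by omega),
      Fin.eq_sub_ofNat_iff (show 1 ≤ m by omega), Fin.ext_iff]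
    generalize (Fin.cycleIcc 2 ⊤ j).val = k at hτ ⊢
    split_ifs at hτ <;> subst hτ <;> simp (disch := omega) only [if_pos, if_neg]
    norm_num

theorem abs_det_socMatrix_updateRow (hm : 4 ≤ m) (c : ℝ) :
    |((socMatrix m).updateRow ⊤ (Pi.single 2 c)).det| = |c| := by
  rw [abs_det_eq_abs_prod_of_isUpperTriangular_submatrix _ _
    (socMatrix_updateRow_submatrix_isUpperTriangular hm c), Finset.abs_prod,
    Finset.prod_eq_single ⊤]
  · rw [updateRow_self, Fin.cycleIcc_of_last le_top, Pi.single_eq_same]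
  · intro i _ hi
    have hτ := Fin.val_cycleIcc_two_top (by omega) (lt_of_le_of_ne le_top hi)
    have := i.isLt
    rw [updateRow_ne hi]
    rw [Ne, Fin.ext_iff, Fin.val_top] at hi
    simp only [socMatrix, of_apply, Fin.eq_sub_ofNat_iff hm,
      Fin.eq_sub_ofNat_iff (show 3 ≤ m by omega), Fin.eq_sub_ofNat_iff (show 2 ≤ m by omega),
      Fin.eq_sub_ofNat_iff (show 1 ≤ m by omega), Fin.ext_iff]
    generalize (Fin.cycleIcc 2 ⊤ i).val = k at hτ ⊢
    split_ifs at hτ <;> subst hτ <;> simp (disch := omega) only [if_pos, if_neg]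
    all_goals norm_num
  · simp

end

/-- **from Theorem 4.7, even case.** For even `m ≥ 4`, the `m × m` matrix whose
first two columns are `e 1`, `e 2` and whose remaining columns are
`e (i-2) + e (i-1) - e i - e (i+1)` for `i = 1, …, m-2` (paper indices cyclic mod `m` in
`{1,…,m}`; here `0`-indexed, so column `j` with `j ∉ {0,1}` corresponds to `i = j - 1` and is
`e (j-4) + e (j-3) - e (j-2) - e (j-1)` with `Fin m` arithmetic) has `|det| = m/2`. -/
theorem soc_even_det (m : ℕ) (hm : 4 ≤ m) (heven : Even m) [NeZero m]
    (M : Matrix (Fin m) (Fin m) ℝ)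
    (hM0 : ∀ t : Fin m, M t 0 = if t = 0 then 1 else 0)
    (hM1 : ∀ t : Fin m, M t 1 = if t = 1 then 1 else 0)
    (hM : ∀ (t j : Fin m), j ≠ 0 → j ≠ 1 → M t j =
      (if t = j - 4 then 1 else 0) + (if t = j - 3 then 1 else 0)
      - (if t = j - 2 then 1 else 0) - (if t = j - 1 then 1 else 0)) :
    |M.det| = (m : ℝ) / 2 := by
  have h1 : (1 : Fin m).val = 1 := Fin.val_ofNat_of_lt (show 1 < m by omega)
  have hMsoc : M = socMatrix m := by
    ext t j
    by_cases hj : j.val < 2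
    · rw [socMatrix, of_apply, if_pos hj]
      obtain rfl | rfl : j = 0 ∨ j = 1 := by simp only [Fin.ext_iff, Fin.val_zero, h1]; omega
      exacts [hM0 t, hM1 t]
    · rw [socMatrix, of_apply, if_neg hj]
      exact hM t j (fun h => hj (by simp [h])) (fun h => hj (by rw [h, h1]; omega))
  have hw : socWeight m ⊤ = 1 := if_pos (by rw [Fin.val_top]; omega)
  rw [hMsoc, ← one_mul (socMatrix m).det, ← hw, ← det_updateRow_vecMul,
    vecMul_socWeight_socMatrix hm heven, abs_det_socMatrix_updateRow hm,
    abs_of_nonneg (by positivity)]
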